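/- There is no differentiable surjection from ℝ onto ℝ² (consequence of Morayne's theorem); hence a single differentiable function cannot encode pairs of reals surjectively. -/

import Mathlib

/-!
A differentiable map is pointwise Lipschitz: near each point `x` it satisfies
`dist (f y) (f x) ≤ K * dist y x`. Sorting the points by the integer size of `K` and of the
radius on which the bound holds splits the domain into countably many pieces, on each of which
`f` is locally Lipschitz. Lipschitz maps do not raise Hausdorff dimension and `dimH` is countably
stable, so `dimH (range f) ≤ 1` for `f : ℝ → ℝ × ℝ`, while `ℝ × ℝ` has dimension `2`.
-/

open Set Metric Topology NNReal Module

section PointwiseLipschitz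

variable {X Y : Type*} [MetricSpace X] [MetricSpace Y]

theorem lipschitzOnWith_inter_ball_half {f : X → Y} {K : ℝ≥0} {r : ℝ} {s : Set X}
    (hs : ∀ x ∈ s, ∀ y ∈ ball x r, dist (f y) (f x) ≤ K * dist y x) (c : X) :
    LipschitzOnWith K f (s ∩ ball c (r / 2)) := by
  refine LipschitzOnWith.of_dist_le_mul fun z hz y hy => hs y hy.1 z ?_
  calc dist z y ≤ dist z c + dist y c := dist_triangle_right z y c
    _ < r / 2 + r / 2 := add_lt_add hz.2 hy.2
    _ = r := add_halves r

theorem dimH_image_le_of_eventually_dist_le [SecondCountableTopology X] {f : X → Y} {s : Set X}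
    (hf : ∀ x ∈ s, ∃ K : ℝ, ∀ᶠ y in 𝓝 x, dist (f y) (f x) ≤ K * dist y x) :
    dimH (f '' s) ≤ dimH s := by
  set T : ℕ → Set X := fun n =>
    {x ∈ s | ∀ y ∈ ball x (1 / (n + 1)), dist (f y) (f x) ≤ (n : ℝ≥0) * dist y x}
  have hcover : s ⊆ ⋃ n, T n := by
    intro x hx
    obtain ⟨K, hK⟩ := hf x hx
    obtain ⟨ε, hε, hball⟩ := eventually_nhds_iff_ball.1 hK
    obtain ⟨n, hKn, hnε⟩ : ∃ n : ℕ, K ≤ n ∧ 1 / ((n : ℝ) + 1) < ε := by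
      obtain ⟨n₁, hn₁⟩ := exists_nat_ge K
      obtain ⟨n₂, hn₂⟩ := exists_nat_one_div_lt hε
      refine ⟨max n₁ n₂, hn₁.trans (by exact_mod_cast le_max_left n₁ n₂), lt_of_le_of_lt ?_ hn₂⟩
      gcongr
      exact_mod_cast le_max_right n₁ n₂
    refine mem_iUnion.2 ⟨n, hx, fun y hy => (hball y (ball_subset_ball hnε.le hy)).trans ?_⟩
    exact mul_le_mul_of_nonneg_right (by simpa using hKn) dist_nonneg
  have hpiece : ∀ n, dimH (f '' T n) ≤ dimH s := fun n => by
    refine (dimH_image_le_of_locally_lipschitzOn fun x _ => ⟨n, _, ?_,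
      lipschitzOnWith_inter_ball_half (s := T n) (fun x hx => hx.2) x⟩).trans
      (dimH_mono fun x hx => hx.1)
    exact inter_mem_nhdsWithin _ (ball_mem_nhds x (by positivity))
  calc dimH (f '' s) ≤ dimH (⋃ n, f '' T n) := dimH_mono (by rw [← image_iUnion]; gcongr)
    _ = ⨆ n, dimH (f '' T n) := dimH_iUnion _
    _ ≤ dimH s := iSup_le hpiece

end PointwiseLipschitz

section Differentiable

variable {E F : Type*} [NormedAddCommGroup E] [NormedSpace ℝ E]
  [NormedAddCommGroup F] [NormedSpace ℝ F] [FiniteDimensional ℝ E]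

theorem Differentiable.dimH_range_le {f : E → F} (hf : Differentiable ℝ f) :
    dimH (range f) ≤ finrank ℝ E :=
  calc dimH (range f) = dimH (f '' univ) := by rw [image_univ]
    _ ≤ dimH (univ : Set E) :=
        dimH_image_le_of_eventually_dist_le fun x _ =>
          let ⟨K, hK⟩ := (hf x).hasFDerivAt.isBigO_sub.bound
          ⟨K, by simpa only [dist_eq_norm] using hK⟩
    _ = finrank ℝ E := Real.dimH_univ_eq_finrank E

theorem Differentiable.dense_compl_range_of_finrank_lt_finrank [FiniteDimensional ℝ F]
    {f : E → F} (hf : Differentiable ℝ f) (hEF : finrank ℝ E < finrank ℝ F) :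
    Dense (range f)ᶜ :=
  dense_compl_of_dimH_lt_finrank <| hf.dimH_range_le.trans_lt <| Nat.cast_lt.2 hEF

theorem Differentiable.not_surjective_of_finrank_lt_finrank [FiniteDimensional ℝ F]
    {f : E → F} (hf : Differentiable ℝ f) (hEF : finrank ℝ E < finrank ℝ F) :
    ¬ Function.Surjective f := fun hsurj => by
  simpa [hsurj.range_eq] using (hf.dense_compl_range_of_finrank_lt_finrank hEF).nonempty

end Differentiable

theorem no_differentiable_surjection_R_to_R2 :
    ¬ ∃ f : ℝ → ℝ × ℝ, Differentiable ℝ f ∧ Function.Surjective f := by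
  rintro ⟨f, hf, hsurj⟩
  exact hf.not_surjective_of_finrank_lt_finrank (by simp) hsurj
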